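/- (Elkasapy–Thom) For every n ≥ 1 and every m ≥ 1, the n-th Engel word map eₙ is surjective on the special unitary group SU(m): for every c ∈ SU(m) there exist g, h ∈ SU(m) with eₙ(g,h) = c. -/

import Mathlib

open Matrix

/-- The special unitary group `SU(m)` is a group: the inverse of `A` is `star A`. -/
instance SUgroup (m : ℕ) : Group (specialUnitaryGroup (Fin m) ℂ) :=
  { (inferInstance : Monoid (specialUnitaryGroup (Fin m) ℂ)) with
    inv := fun A => ⟨star A.1, by
      rcases Submonoid.mem_inf.mp A.2 with ⟨h1, h2⟩
      refine Submonoid.mem_inf.mpr ⟨Unitary.star_mem h1, ?_⟩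
      rw [MonoidHom.mem_mker] at h2 ⊢
      show (star A.1).det = 1
      rw [Matrix.star_eq_conjTranspose, Matrix.det_conjTranspose]
      rw [show A.1.det = 1 from h2, star_one]⟩
    inv_mul_cancel := fun A => by
      rcases Submonoid.mem_inf.mp A.2 with ⟨h1, -⟩
      exact Subtype.ext (Matrix.mem_unitaryGroup_iff'.mp h1) }

/-- The word map on a group `G` induced by a word `w` in the free group on two
generators: substitute `g` for the first generator and `h` for the second. -/
def wordMap {G : Type*} [Group G] (w : FreeGroup (Fin 2)) (g h : G) : G :=
  FreeGroup.lift ![g, h] w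

open scoped commutatorElement in
/-- The Engel words: `engel 1 = ⁅x,y⁆`, `engel (n+1) = ⁅engel n, y⁆`
(here `engel 0 = x`, so that `engel 1 = ⁅x, y⁆`). -/
def engel : ℕ → FreeGroup (Fin 2)
  | 0 => FreeGroup.of 0
  | n + 1 => ⁅engel n, FreeGroup.of 1⁆

open Polynomial Complex in
lemma exists_good_scalar {m : ℕ} (c : Matrix (Fin m) (Fin m) ℂ) :
    ∃ ζ : ℂ, ‖ζ‖ = 1 ∧ IsUnit (1 + ζ • c) := by
  set p : ℂ[X] := (1 + (X : ℂ[X]) • c.map Polynomial.C).det with hp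
  have heval : ∀ ζ : ℂ, p.eval ζ = (1 + ζ • c).det := by
    intro ζ
    have := (evalRingHom ζ).map_det (1 + (X : ℂ[X]) • c.map Polynomial.C)
    rw [hp]
    rw [show eval ζ ((1 + (X : ℂ[X]) • c.map Polynomial.C).det)
      = (evalRingHom ζ) ((1 + (X : ℂ[X]) • c.map Polynomial.C).det) from rfl, this]
    congr 1
    ext i j
    simp only [RingHom.mapMatrix_apply, Matrix.map_apply, Matrix.add_apply, Matrix.smul_apply,
      Matrix.one_apply, Matrix.map_apply, smul_eq_mul, coe_evalRingHom, eval_add, eval_mul,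
      eval_X, eval_C, apply_ite (eval ζ), eval_one, eval_zero]
  have hp0 : p ≠ 0 := by
    intro h
    have : p.eval 0 = 1 := by
      rw [heval]; simp
    rw [h] at this; simp at this
  have hfin : Set.Finite {x : ℂ | IsRoot p x} := p.finite_setOf_isRoot hp0
  set ι : ℝ → ℂ := fun t => (1 + t * I) / (1 - t * I) with hι
  have hden : ∀ t : ℝ, (1 : ℂ) - t * I ≠ 0 := by
    intro t h
    have := congrArg Complex.re h
    simp at this
  have hnum : ∀ t : ℝ, (1 : ℂ) + t * I ≠ 0 := by
    intro t h
    have := congrArg Complex.re h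
    simp at this
  have hinj : Function.Injective ι := by
    intro s t h
    simp only [hι] at h
    rw [div_eq_div_iff (hden s) (hden t)] at h
    have h2 : (s : ℂ) * I * 2 = (t : ℂ) * I * 2 := by ring_nf at h ⊢; linear_combination h
    field_simp [Complex.I_ne_zero] at h2
    exact_mod_cast h2
  have hrange : (Set.range ι).Infinite := Set.infinite_range_of_injective hinj
  obtain ⟨ζ, hζr, hζp⟩ := (hrange.diff hfin).nonempty
  obtain ⟨t, rfl⟩ := hζr
  refine ⟨ι t, ?_, ?_⟩
  · simp only [hι, norm_div]
    rw [show (1 : ℂ) - t * I = starRingEnd ℂ (1 + t * I) by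
      simp [Complex.conj_ofReal, sub_eq_add_neg]]
    rw [Complex.norm_conj, div_self]
    exact norm_ne_zero_iff.mpr (hnum t)
  · rw [Matrix.isUnit_iff_isUnit_det]
    refine Ne.isUnit ?_
    rw [← heval]
    exact fun h => hζp h

open Complex in
lemma unitary_diagonalizable {m : ℕ} (c : Matrix (Fin m) (Fin m) ℂ)
    (hc : c ∈ Matrix.unitaryGroup (Fin m) ℂ) :
    ∃ u ∈ Matrix.unitaryGroup (Fin m) ℂ, ∃ ν : Fin m → ℂ,
      (∀ j, ‖ν j‖ = 1) ∧ c = u * diagonal ν * star u := by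
  obtain ⟨ζ, hζ, hunit⟩ := exists_good_scalar c
  have hζ0 : ζ ≠ 0 := by
    intro h; rw [h] at hζ; simp at hζ
  set c' : Matrix (Fin m) (Fin m) ℂ := ζ • c with hc'def
  have hc' : c' ∈ Matrix.unitaryGroup (Fin m) ℂ := by
    rw [Matrix.mem_unitaryGroup_iff'] at hc ⊢
    rw [hc'def, star_smul, Matrix.smul_mul, Matrix.mul_smul, smul_smul, hc]
    rw [RCLike.star_def, ← Complex.normSq_eq_conj_mul_self,
      ← Complex.sq_norm, hζ]
    norm_num
  have hsc' : star c' * c' = 1 := Matrix.mem_unitaryGroup_iff'.mp hc'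
  have hc's : c' * star c' = 1 := Matrix.mem_unitaryGroup_iff.mp hc'
  have hdet : IsUnit (1 + c').det := (Matrix.isUnit_iff_isUnit_det _).mp hunit
  set B : Matrix (Fin m) (Fin m) ℂ := (1 + c')⁻¹ with hBdef
  have h1 : (1 + c') * B = 1 := Matrix.mul_nonsing_inv _ hdet
  have h2 : B * (1 + c') = 1 := Matrix.nonsing_inv_mul _ hdet
  have hcomm : c' * B = B * c' := by
    calc c' * B = (B * (1 + c')) * (c' * B) := by rw [h2, one_mul]
    _ = B * ((1 + c') * c') * B := by noncomm_ring
    _ = B * (c' * (1 + c')) * B := by noncomm_ring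
    _ = (B * c') * ((1 + c') * B) := by noncomm_ring
    _ = B * c' := by rw [h1, mul_one]
  have hcommB : B * (1 - c') = (1 - c') * B := by
    rw [Matrix.mul_sub, Matrix.sub_mul, mul_one, one_mul, hcomm]
  set H : Matrix (Fin m) (Fin m) ℂ := Complex.I • ((1 - c') * B) with hHdef
  have hH : H.IsHermitian := by
    have hstarinv : (star c')⁻¹ = c' := Matrix.inv_eq_right_inv hsc'
    have hBstar : star B = B * c' := by
      rw [hBdef, Matrix.star_eq_conjTranspose, Matrix.conjTranspose_nonsing_inv]
      have : (1 + c')ᴴ = star c' * (1 + c') := by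
        rw [Matrix.conjTranspose_add, Matrix.conjTranspose_one, mul_add, mul_one,
          ← Matrix.star_eq_conjTranspose, hsc']
        rw [add_comm]
      rw [this, Matrix.mul_inv_rev, hstarinv]
    have hstar1c : star ((1 : Matrix (Fin m) (Fin m) ℂ) - c') = -((1 - c') * star c') := by
      rw [star_sub, star_one, Matrix.sub_mul, one_mul, hc's]
      noncomm_ring
    show Hᴴ = H
    rw [hHdef, Matrix.conjTranspose_smul, Matrix.conjTranspose_mul]
    rw [← Matrix.star_eq_conjTranspose, ← Matrix.star_eq_conjTranspose, hBstar, hstar1c]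
    rw [show (star Complex.I) = -Complex.I by simp]
    rw [show B * c' * -((1 - c') * star c') = -(B * ((1 - c') * (c' * star c'))) by noncomm_ring,
      hc's, mul_one, smul_neg, neg_smul, neg_neg, hcommB]
  -- spectral theorem
  set u := hH.eigenvectorUnitary with hudef
  set d := hH.eigenvalues with hddef
  have hspec : H = (u : Matrix (Fin m) (Fin m) ℂ) * diagonal (RCLike.ofReal ∘ d) *
      (star (u : Matrix (Fin m) (Fin m) ℂ)) := hH.spectral_theorem
  have huu : (u : Matrix (Fin m) (Fin m) ℂ) * star (u : Matrix (Fin m) (Fin m) ℂ) = 1 :=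
    Matrix.mem_unitaryGroup_iff.mp u.2
  have hsuu : star (u : Matrix (Fin m) (Fin m) ℂ) * (u : Matrix (Fin m) (Fin m) ℂ) = 1 :=
    Matrix.mem_unitaryGroup_iff'.mp u.2
  have hconj : ∀ X Y : Matrix (Fin m) (Fin m) ℂ,
      ((u : Matrix (Fin m) (Fin m) ℂ) * X * star (u : Matrix (Fin m) (Fin m) ℂ)) *
      ((u : Matrix (Fin m) (Fin m) ℂ) * Y * star (u : Matrix (Fin m) (Fin m) ℂ)) =
      (u : Matrix (Fin m) (Fin m) ℂ) * (X * Y) * star (u : Matrix (Fin m) (Fin m) ℂ) := by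
    intro X Y
    calc ((u : Matrix (Fin m) (Fin m) ℂ) * X * star (u : Matrix (Fin m) (Fin m) ℂ)) *
        ((u : Matrix (Fin m) (Fin m) ℂ) * Y * star (u : Matrix (Fin m) (Fin m) ℂ))
        = (u : Matrix (Fin m) (Fin m) ℂ) *
          (X * ((star (u : Matrix (Fin m) (Fin m) ℂ) * (u : Matrix (Fin m) (Fin m) ℂ)) * Y)) *
          star (u : Matrix (Fin m) (Fin m) ℂ) := by noncomm_ring
    _ = _ := by rw [hsuu, one_mul]
  have hd1 : ∀ j, ((d j : ℂ) + Complex.I) ≠ 0 := by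
    intro j h
    have := congrArg Complex.im h
    simp at this
  set μ : Fin m → ℂ := fun j => (Complex.I - (d j : ℂ)) / ((d j : ℂ) + Complex.I) with hμdef
  have hμabs : ∀ j, ‖μ j‖ = 1 := by
    intro j
    rw [hμdef]
    simp only
    rw [norm_div]
    rw [show Complex.I - (d j : ℂ) = -(starRingEnd ℂ ((d j : ℂ) + Complex.I)) by
      simp [Complex.conj_ofReal]; ring]
    rw [norm_neg, Complex.norm_conj,
      div_self (norm_ne_zero_iff.mpr (hd1 j))]
  have hIdiag : (Complex.I • 1 : Matrix (Fin m) (Fin m) ℂ) = diagonal (fun _ => Complex.I) := by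
    ext i j
    rcases eq_or_ne i j with rfl | hij
    · simp
    · simp [Matrix.one_apply_ne hij, Matrix.diagonal_apply_ne _ hij]
  have hIdiag' : (Complex.I • 1 : Matrix (Fin m) (Fin m) ℂ) =
      (u : Matrix (Fin m) (Fin m) ℂ) * diagonal (fun _ => Complex.I) *
        star (u : Matrix (Fin m) (Fin m) ℂ) := by
    rw [← hIdiag, Matrix.mul_smul, mul_one, Matrix.smul_mul, huu]
  -- key identities
  have hkey1 : c' * (H + Complex.I • 1) = Complex.I • 1 - H := by
    have hX : (1 + c') * ((1 - c') * B) = 1 - c' := by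
      calc (1 + c') * ((1 - c') * B) = (1 - c') * ((1 + c') * B) := by noncomm_ring
      _ = 1 - c' := by rw [h1, mul_one]
    have hkk : c' * ((1 - c') * B) + c' = 1 - (1 - c') * B := by
      have h4 : c' * ((1 - c') * B) + ((1 - c') * B) + c' = 1 := by
        calc c' * ((1 - c') * B) + ((1 - c') * B) + c'
            = (1 + c') * ((1 - c') * B) + c' := by noncomm_ring
        _ = (1 - c') + c' := by rw [hX]
        _ = 1 := by noncomm_ring
      linear_combination (norm := noncomm_ring) h4
    rw [hHdef, Matrix.mul_add, mul_smul_comm, Matrix.mul_smul, mul_one, ← smul_add, hkk,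
      smul_sub]
  have hdiagmul : diagonal μ * (diagonal (RCLike.ofReal ∘ d) + diagonal (fun _ => Complex.I)) =
      diagonal (fun _ => Complex.I) - diagonal (RCLike.ofReal ∘ d) := by
    ext i j
    rcases eq_or_ne i j with rfl | hij
    · simp only [Matrix.add_apply, Matrix.sub_apply, Matrix.diagonal_add,
        Matrix.diagonal_mul_diagonal, Matrix.diagonal_apply_eq, Pi.add_apply,
        Function.comp_apply, hμdef]
      exact div_mul_cancel₀ _ (hd1 i)
    · simp [Matrix.diagonal_add, Matrix.diagonal_mul_diagonal, Matrix.sub_apply,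
        Matrix.diagonal_apply_ne _ hij]
  have hHI : H + Complex.I • 1 = (u : Matrix (Fin m) (Fin m) ℂ) *
      (diagonal (RCLike.ofReal ∘ d) + diagonal (fun _ => Complex.I)) *
      star (u : Matrix (Fin m) (Fin m) ℂ) := by
    rw [Matrix.mul_add, Matrix.add_mul, ← hspec, ← hIdiag']
  have hIH : Complex.I • 1 - H = (u : Matrix (Fin m) (Fin m) ℂ) *
      (diagonal (fun _ => Complex.I) - diagonal (RCLike.ofReal ∘ d)) *
      star (u : Matrix (Fin m) (Fin m) ℂ) := by
    rw [Matrix.mul_sub, Matrix.sub_mul, ← hspec, ← hIdiag']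
  have hkey2 : ((u : Matrix (Fin m) (Fin m) ℂ) * diagonal μ * star (u : Matrix (Fin m) (Fin m) ℂ))
      * (H + Complex.I • 1) = Complex.I • 1 - H := by
    rw [hHI, hconj, hdiagmul, ← hIH]
  have hHIunit : IsUnit (H + Complex.I • 1) := by
    have hdetu : (u : Matrix (Fin m) (Fin m) ℂ).det * (star (u : Matrix (Fin m) (Fin m) ℂ)).det
        = 1 := by
      rw [← Matrix.det_mul, huu, Matrix.det_one]
    have hdd : (diagonal (RCLike.ofReal ∘ d) + diagonal (fun _ => Complex.I)
        : Matrix (Fin m) (Fin m) ℂ) = diagonal (fun j => (d j : ℂ) + Complex.I) := by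
      ext i j
      rcases eq_or_ne i j with rfl | hij
      · simp [Matrix.diagonal_apply_eq]
      · simp [Matrix.diagonal_apply_ne _ hij]
    rw [hHI, hdd, Matrix.isUnit_iff_isUnit_det, Matrix.det_mul, Matrix.det_mul,
      Matrix.det_diagonal]
    refine ((IsUnit.of_mul_eq_one _ hdetu).mul ?_).mul
      (IsUnit.of_mul_eq_one _ (by rw [mul_comm] at hdetu; exact hdetu))
    exact Ne.isUnit (Finset.prod_ne_zero_iff.mpr fun j _ => hd1 j)
  have hc'eq : c' = (u : Matrix (Fin m) (Fin m) ℂ) * diagonal μ *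
      star (u : Matrix (Fin m) (Fin m) ℂ) := hHIunit.mul_right_cancel (hkey1.trans hkey2.symm)
  refine ⟨u, u.2, fun j => ζ⁻¹ * μ j, ?_, ?_⟩
  · intro j
    rw [norm_mul, norm_inv, hζ, hμabs j, inv_one, one_mul]
  · have hcc : c = ζ⁻¹ • c' := by
      rw [hc'def, smul_smul, inv_mul_cancel₀ hζ0, one_smul]
    rw [hcc, hc'eq]
    rw [show (fun j => ζ⁻¹ * μ j) = ζ⁻¹ • μ from rfl, Matrix.diagonal_smul,
      Matrix.mul_smul, Matrix.smul_mul]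

open Complex in
lemma diagonal_mem_unitaryGroup {m : ℕ} {β : Fin m → ℂ} (hβ : ∀ j, ‖β j‖ = 1) :
    diagonal β ∈ Matrix.unitaryGroup (Fin m) ℂ := by
  rw [Matrix.mem_unitaryGroup_iff']
  rw [Matrix.star_eq_conjTranspose, Matrix.diagonal_conjTranspose, Matrix.diagonal_mul_diagonal]
  have h1 : ∀ j, star (β j) * β j = 1 := fun j => by
    simp only [RCLike.star_def, ← Complex.normSq_eq_conj_mul_self, ← Complex.sq_norm, hβ j]
    norm_num
  ext i j
  rcases eq_or_ne i j with rfl | hij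
  · simp only [Matrix.diagonal_apply_eq, Matrix.one_apply_eq]
    exact h1 i
  · simp [Matrix.diagonal_apply_ne _ hij, Matrix.one_apply_ne hij]

lemma su_diagonalizable {m : ℕ} (hm : 1 ≤ m) (c : Matrix (Fin m) (Fin m) ℂ)
    (hc : c ∈ Matrix.specialUnitaryGroup (Fin m) ℂ) :
    ∃ u ∈ Matrix.specialUnitaryGroup (Fin m) ℂ, ∃ ν : Fin m → ℂ,
      (∀ j, ‖ν j‖ = 1) ∧ (∏ j, ν j = 1) ∧ c = u * diagonal ν * star u := by
  obtain ⟨hcu, hcdet⟩ := Matrix.mem_specialUnitaryGroup_iff.mp hc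
  obtain ⟨u, hu, ν, hν, hceq⟩ := unitary_diagonalizable c hcu
  have huu : u * star u = 1 := Matrix.mem_unitaryGroup_iff.mp hu
  have hdetu : u.det * (star u).det = 1 := by rw [← Matrix.det_mul, huu, Matrix.det_one]
  have hdetu0 : u.det ≠ 0 := left_ne_zero_of_mul_eq_one hdetu
  have hprod : ∏ j, ν j = 1 := by
    have hd := congrArg Matrix.det hceq
    rw [hcdet, Matrix.det_mul, Matrix.det_mul, Matrix.det_diagonal] at hd
    have h3 : u.det * (∏ j, ν j) * (star u).det = (∏ j, ν j) * (u.det * (star u).det) := by ring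
    rw [h3, hdetu, mul_one] at hd
    exact hd.symm
  set j₀ : Fin m := ⟨0, hm⟩ with hj₀
  set δ : Fin m → ℂ := fun j => if j = j₀ then u.det⁻¹ else 1 with hδ
  have hδabs : ∀ j, ‖δ j‖ = 1 := by
    intro j
    rw [hδ]
    simp only
    split
    · rw [norm_inv]
      have : ‖u.det‖ = 1 := by
        have h2 : (star u).det = starRingEnd ℂ u.det := by
          rw [Matrix.star_eq_conjTranspose, Matrix.det_conjTranspose]; rfl
        rw [h2] at hdetu
        have := congrArg (‖·‖) hdetu
        rw [norm_mul, Complex.norm_conj, norm_one] at this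
        nlinarith [norm_nonneg u.det]
      rw [this, inv_one]
    · exact norm_one
  have hδu : diagonal δ ∈ Matrix.unitaryGroup (Fin m) ℂ := diagonal_mem_unitaryGroup hδabs
  refine ⟨u * diagonal δ, ?_, ν, hν, hprod, ?_⟩
  · rw [Matrix.mem_specialUnitaryGroup_iff]
    constructor
    · exact Submonoid.mul_mem _ hu hδu
    · rw [Matrix.det_mul, Matrix.det_diagonal, hδ]
      rw [Finset.prod_ite_eq' Finset.univ j₀ (fun _ => u.det⁻¹)]
      simp [mul_inv_cancel₀ hdetu0]
  · rw [hceq]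
    rw [StarMul.star_mul]
    rw [show star (diagonal δ) = diagonal (star δ) by
      rw [Matrix.star_eq_conjTranspose, Matrix.diagonal_conjTranspose]]
    calc u * diagonal ν * star u
        = u * (diagonal δ * diagonal ν * diagonal (star δ)) * star u := by
          have h5 : (fun i => δ i * ν i * star (δ i)) = ν := funext fun j => by
            rw [show δ j * ν j * star (δ j) = (star (δ j) * δ j) * ν j by ring]
            rw [RCLike.star_def, ← Complex.normSq_eq_conj_mul_self, ← Complex.sq_norm, hδabs j]
            norm_num
          rw [Matrix.diagonal_mul_diagonal, Matrix.diagonal_mul_diagonal]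
          rw [show (fun i => δ i * ν i * star δ i) = (fun i => δ i * ν i * star (δ i)) from rfl, h5]
    _ = u * diagonal δ * diagonal ν * (diagonal (star δ) * star u) := by noncomm_ring

open Complex in
-- word map lemmas
lemma wordMap_engel_zero {G : Type*} [Group G] (g h : G) : wordMap (engel 0) g h = g := by
  show FreeGroup.lift ![g, h] (FreeGroup.of 0) = g
  rw [FreeGroup.lift_apply_of]
  rfl

open scoped commutatorElement in
lemma wordMap_engel_succ {G : Type*} [Group G] (n : ℕ) (g h : G) :
    wordMap (engel (n + 1)) g h = ⁅wordMap (engel n) g h, h⁆ := by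
  show FreeGroup.lift ![g, h] ⁅engel n, FreeGroup.of 1⁆ = _
  rw [map_commutatorElement]
  congr 1
  rw [FreeGroup.lift_apply_of]
  rfl

lemma wordMap_conj {G : Type*} [Group G] (w : FreeGroup (Fin 2)) (g h u : G) :
    wordMap w (u * g * u⁻¹) (u * h * u⁻¹) = u * wordMap w g h * u⁻¹ := by
  have : FreeGroup.lift ![u * g * u⁻¹, u * h * u⁻¹] =
      (MulAut.conj u).toMonoidHom.comp (FreeGroup.lift ![g, h]) := by
    apply FreeGroup.ext_hom
    intro a
    fin_cases a <;> simp [FreeGroup.lift_apply_of, MulAut.conj_apply]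
  show FreeGroup.lift ![u * g * u⁻¹, u * h * u⁻¹] w = _
  rw [this]
  rfl

-- the shift permutation matrix
section shift
variable {m : ℕ}

lemma permMatrix_mul_diagonal (e : Equiv.Perm (Fin m)) (v : Fin m → ℂ) :
    (e.toPEquiv.toMatrix : Matrix (Fin m) (Fin m) ℂ) * diagonal v =
      diagonal (v ∘ e) * e.toPEquiv.toMatrix := by
  rw [PEquiv.toMatrix_toPEquiv_mul, PEquiv.mul_toMatrix_toPEquiv]
  ext i j
  simp only [Matrix.submatrix_apply, id_eq]
  rcases eq_or_ne (e i) j with rfl | hij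
  · rw [Matrix.diagonal_apply_eq, Equiv.symm_apply_apply, Matrix.diagonal_apply_eq]
    rfl
  · rw [Matrix.diagonal_apply_ne _ hij, Matrix.diagonal_apply_ne]
    intro hcon
    exact hij (by rw [hcon, Equiv.apply_symm_apply])

lemma permMatrix_mem_unitary (e : Equiv.Perm (Fin m)) :
    (e.toPEquiv.toMatrix : Matrix (Fin m) (Fin m) ℂ) ∈ Matrix.unitaryGroup (Fin m) ℂ := by
  rw [Matrix.mem_unitaryGroup_iff']
  have hstar : (star (e.toPEquiv.toMatrix : Matrix (Fin m) (Fin m) ℂ)) =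
      (e.symm.toPEquiv.toMatrix : Matrix (Fin m) (Fin m) ℂ) := by
    rw [Matrix.star_eq_conjTranspose]
    rw [show (e.symm.toPEquiv : Fin m ≃. Fin m) = e.toPEquiv.symm from Equiv.toPEquiv_symm e]
    rw [PEquiv.toMatrix_symm]
    ext i j
    simp only [Matrix.conjTranspose_apply, Matrix.transpose_apply, PEquiv.toMatrix_apply]
    split <;> simp
  rw [hstar, ← PEquiv.toMatrix_trans, ← Equiv.toPEquiv_trans]
  simp [Equiv.symm_trans_self]
end shift

open scoped commutatorElement in
lemma comm_of_shift {G : Type*} [Group G] {h b b' : G} (hc : h * b = b' * h) :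
    ⁅b, h⁆ = b * b'⁻¹ := by
  have hb' : b' = h * b * h⁻¹ := by rw [eq_comm, mul_inv_eq_iff_eq_mul]; exact hc
  rw [commutatorElement_def, hb']
  group

open Fin.NatCast in
theorem elkasapy_thom_engel_surjective_on_SU (n : ℕ) (hn : 1 ≤ n)
    (m : ℕ) (hm : 1 ≤ m) (c : specialUnitaryGroup (Fin m) ℂ) :
    ∃ g h : specialUnitaryGroup (Fin m) ℂ, wordMap (engel n) g h = c := by
  obtain ⟨m', rfl⟩ : ∃ m', m = m' + 1 := ⟨m - 1, (Nat.succ_pred_eq_of_pos hm).symm⟩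
  -- diagonalize c
  obtain ⟨u, hu, ν, hν1, hν2, hceq⟩ := su_diagonalizable hm c.1 c.2
  -- the shift element
  set σ : Equiv.Perm (Fin (m' + 1)) := (finRotate (m' + 1)).symm with hσ
  set δ : Fin (m' + 1) → ℂ := fun j => if j = 0 then (-1 : ℂ) ^ m' else 1 with hδ
  have hδabs : ∀ j, ‖δ j‖ = 1 := by
    intro j
    rw [hδ]
    simp only
    split
    · simp
    · simp
  set h₀ : Matrix (Fin (m' + 1)) (Fin (m' + 1)) ℂ := σ.toPEquiv.toMatrix * diagonal δ with hh₀
  have hh₀mem : h₀ ∈ Matrix.specialUnitaryGroup (Fin (m' + 1)) ℂ := by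
    rw [Matrix.mem_specialUnitaryGroup_iff]
    constructor
    · exact Submonoid.mul_mem _ (permMatrix_mem_unitary σ) (diagonal_mem_unitaryGroup hδabs)
    · rw [Matrix.det_mul, Matrix.det_diagonal]
      rw [show Matrix.det (σ.toPEquiv.toMatrix : Matrix (Fin (m' + 1)) (Fin (m' + 1)) ℂ)
          = (Equiv.Perm.sign σ : ℂ) from Matrix.det_permutation σ]
      rw [hδ, Finset.prod_ite_eq' Finset.univ (0 : Fin (m' + 1)) (fun _ => (-1 : ℂ) ^ m')]
      rw [hσ, Equiv.Perm.sign_symm, sign_finRotate]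
      simp only [Finset.mem_univ, if_true]
      push_cast
      rw [← pow_add]
      exact Even.neg_one_pow ⟨m', rfl⟩
  set hh : specialUnitaryGroup (Fin (m' + 1)) ℂ := ⟨h₀, hh₀mem⟩ with hhdef
  -- the torus
  have hdiagmem : ∀ {β : Fin (m' + 1) → ℂ}, (∀ j, ‖β j‖ = 1) → (∏ j, β j = 1) →
      diagonal β ∈ Matrix.specialUnitaryGroup (Fin (m' + 1)) ℂ := by
    intro β h1 h2
    rw [Matrix.mem_specialUnitaryGroup_iff]
    exact ⟨diagonal_mem_unitaryGroup h1, by rw [Matrix.det_diagonal]; exact h2⟩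
  -- commutation property
  have hshift : ∀ (β : Fin (m' + 1) → ℂ), h₀ * diagonal β = diagonal (β ∘ σ) * h₀ := by
    intro β
    calc h₀ * diagonal β = σ.toPEquiv.toMatrix * diagonal (fun i => δ i * β i) := by
          rw [hh₀, mul_assoc, Matrix.diagonal_mul_diagonal]
    _ = diagonal ((fun i => δ i * β i) ∘ σ) * σ.toPEquiv.toMatrix :=
          permMatrix_mul_diagonal σ _
    _ = diagonal (β ∘ σ) * (diagonal (δ ∘ σ) * σ.toPEquiv.toMatrix) := by
          rw [← mul_assoc, Matrix.diagonal_mul_diagonal,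
            show ((fun i => δ i * β i) ∘ σ) = fun i => (β ∘ σ) i * (δ ∘ σ) i
              from funext fun j => mul_comm _ _]
    _ = diagonal (β ∘ σ) * (σ.toPEquiv.toMatrix * diagonal δ) := by
          rw [permMatrix_mul_diagonal σ δ]
    _ = diagonal (β ∘ σ) * h₀ := by rw [hh₀]
  -- key induction
  have key : ∀ (k : ℕ) (β : Fin (m' + 1) → ℂ) (h1 : ∀ j, ‖β j‖ = 1) (h2 : ∏ j, β j = 1),
      ∃ g : specialUnitaryGroup (Fin (m' + 1)) ℂ,
        wordMap (engel k) g hh = ⟨diagonal β, hdiagmem h1 h2⟩ := by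
    intro k
    induction k with
    | zero =>
      intro β h1 h2
      exact ⟨⟨diagonal β, hdiagmem h1 h2⟩, wordMap_engel_zero _ _⟩
    | succ k ih =>
      intro β h1 h2
      -- construct γ
      set z : ℂ := ∏ j : Fin (m' + 1), ∏ k ∈ Finset.range (j.1 + 1), β (k : Fin (m' + 1)) with hz
      have hzabs : ‖z‖ = 1 := by
        rw [hz, norm_prod]
        have hone : ∀ j : Fin (m' + 1), ‖∏ k ∈ Finset.range (j.1 + 1), β (k : Fin (m' + 1))‖ = 1 := by
          intro j
          rw [norm_prod]
          exact Finset.prod_eq_one fun k _ => h1 _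
        rw [Finset.prod_congr rfl fun j _ => hone j]
        exact Finset.prod_const_one
      have hz0 : z ≠ 0 := fun h => by rw [h] at hzabs; simp at hzabs
      obtain ⟨ρ, hρ⟩ := IsAlgClosed.exists_pow_nat_eq z⁻¹ (n := (m' + 1)) (by positivity)
      have hρabs : ‖ρ‖ = 1 := by
        have h3 : ‖ρ‖ ^ (m' + 1) = 1 := by
          rw [← norm_pow, hρ, norm_inv, hzabs, inv_one]
        exact (pow_eq_one_iff_of_nonneg (norm_nonneg ρ) (by omega)).mp h3
      set γ : Fin (m' + 1) → ℂ := fun j => ρ * ∏ k ∈ Finset.range (j.1 + 1), β (k : Fin (m' + 1)) with hγ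
      have hρ0 : ρ ≠ 0 := fun h => by rw [h] at hρabs; simp at hρabs
      have hγabs : ∀ j, ‖γ j‖ = 1 := by
        intro j
        simp only [hγ]
        rw [norm_mul, hρabs, one_mul, norm_prod]
        exact Finset.prod_eq_one fun k _ => h1 _
      have hγprod : ∏ j, γ j = 1 := by
        simp only [hγ]
        rw [Finset.prod_mul_distrib, Finset.prod_const, Finset.card_univ, Fintype.card_fin,
          ← hz, hρ, inv_mul_cancel₀ hz0]
      have hstep : ∀ i : Fin (m' + 1), γ (i + 1) * (γ i)⁻¹ = β (i + 1) := by
        intro i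
        have hprodne : ∀ r : ℕ, (∏ k ∈ Finset.range r, β (k : Fin (m' + 1))) ≠ 0 :=
          fun r => Finset.prod_ne_zero_iff.mpr fun k _ => fun hk => by
            have := h1 (k : Fin (m' + 1)); rw [hk] at this; simp at this
        rcases eq_or_ne i (Fin.last m') with rfl | hlast
        · have h0 : (Fin.last m' + 1 : Fin (m' + 1)) = 0 := Fin.last_add_one m'
          rw [h0]
          have hγ0v : γ 0 = ρ * β 0 := by
            simp only [hγ, Fin.val_zero, zero_add, Finset.prod_range_one, Nat.cast_zero]
          have hγlast : γ (Fin.last m') = ρ := by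
            simp only [hγ, Fin.val_last]
            rw [show (∏ k ∈ Finset.range (m' + 1), β (k : Fin (m' + 1))) = ∏ j : Fin (m' + 1), β j by
              rw [← Fin.prod_univ_eq_prod_range (fun k => β (k : Fin (m' + 1))) (m' + 1)]
              exact Finset.prod_congr rfl fun j _ => by rw [Fin.cast_val_eq_self], h2, mul_one]
          rw [hγ0v, hγlast]
          field_simp
        · have hlt : i < Fin.last m' := by
            rw [Fin.lt_iff_val_lt_val, Fin.val_last]
            exact lt_of_le_of_ne (Nat.lt_succ_iff.mp i.isLt) fun h => hlast (Fin.ext h)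
          have hval : ((i + 1 : Fin (m' + 1)) : ℕ) = i.1 + 1 := Fin.val_add_one_of_lt hlt
          have hcast : ((i.1 + 1 : ℕ) : Fin (m' + 1)) = i + 1 := by
            conv_rhs => rw [← Fin.cast_val_eq_self (i + 1)]
            rw [hval]
          simp only [hγ]
          rw [hval, Finset.prod_range_succ, hcast]
          have hPne := hprodne (i.1 + 1)
          field_simp
          try ring
      have hφ : ∀ j, γ j * (γ (σ j))⁻¹ = β j := by
        intro j
        have hj : σ j + 1 = j := by
          have h5 : finRotate (m' + 1) (σ j) = j := by
            rw [hσ]; exact (finRotate (m' + 1)).apply_symm_apply j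
          rw [show σ j + 1 = finRotate (m' + 1) (σ j) from (finRotate_succ_apply (σ j)).symm, h5]
        have := hstep (σ j)
        rwa [hj] at this
      have hγσabs : ∀ j, ‖(γ ∘ σ) j‖ = 1 := fun j => hγabs (σ j)
      have hγσprod : ∏ j, (γ ∘ σ) j = 1 := by
        rw [show (∏ j, (γ ∘ σ) j) = ∏ j, γ j from Equiv.prod_comp σ γ]
        exact hγprod
      obtain ⟨g, hg⟩ := ih γ hγabs hγprod
      refine ⟨g, ?_⟩
      rw [wordMap_engel_succ, hg]
      have hb' : hh * (⟨diagonal γ, hdiagmem hγabs hγprod⟩ : specialUnitaryGroup (Fin (m' + 1)) ℂ) =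
          (⟨diagonal (γ ∘ σ), hdiagmem hγσabs hγσprod⟩ : specialUnitaryGroup (Fin (m' + 1)) ℂ) * hh :=
        Subtype.ext (hshift γ)
      rw [comm_of_shift hb']
      apply Subtype.ext
      show diagonal γ * star (diagonal (γ ∘ σ)) = diagonal β
      rw [Matrix.star_eq_conjTranspose, Matrix.diagonal_conjTranspose,
        Matrix.diagonal_mul_diagonal]
      have hinv : ∀ x : ℂ, ‖x‖ = 1 → star x = x⁻¹ := by
        intro x hx
        have hx1 : x * star x = 1 := by
          rw [RCLike.star_def, Complex.mul_conj, ← Complex.sq_norm, hx]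
          norm_num
        exact (inv_eq_of_mul_eq_one_right hx1).symm
      have hfun : (fun i => γ i * star (γ (σ i))) = β := funext fun j => by
        rw [hinv _ (hγabs (σ j))]
        exact hφ j
      exact congrArg diagonal hfun
  -- final assembly
  obtain ⟨g, hg⟩ := key n ν hν1 hν2
  set U : specialUnitaryGroup (Fin (m' + 1)) ℂ := ⟨u, hu⟩ with hU
  refine ⟨U * g * U⁻¹, U * hh * U⁻¹, ?_⟩
  rw [wordMap_conj, hg]
  apply Subtype.ext
  show u * diagonal ν * star u = (c : Matrix (Fin (m' + 1)) (Fin (m' + 1)) ℂ)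
  rw [hceq]
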